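/- arXiv:1211.0975 — 4 statements merged into one kernel-verified Lean document; each statement's English description precedes it below -/
import Mathlib

section
/- Let A be a real symmetric n×n matrix with largest eigenvalue magnitude λ₁ = ‖A‖₂. For any 0 ≤ α ≤ 1/4 and any unit vector x with ‖Ax‖₂ ≥ (1−α)λ₁, one has xᵀAx ≥ (1−5α)λ₁, provided all eigenvalues of A are nonnegative. -/
/-!
Write `A = B²` with `B = √A` self-adjoint. Then
`‖Ax‖² = ⟪Bx, A(Bx)⟫ ≤ ‖A‖ ‖Bx‖² = ‖A‖ ⟪x, Ax⟫ ≤ λ₁ ⟪x, Ax⟫`,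
so `‖Ax‖ ≥ (1 - α) λ₁` forces `⟪x, Ax⟫ ≥ (1 - α)² λ₁ ≥ (1 - 5α) λ₁`.
-/

open Matrix WithLp
open scoped InnerProductSpace MatrixOrder ComplexOrder

theorem IsSelfAdjoint.norm_mul_self_apply_sq_le {𝕜 E : Type*} [RCLike 𝕜]
    [NormedAddCommGroup E] [InnerProductSpace 𝕜 E] [CompleteSpace E]
    {S : E →L[𝕜] E} (hS : IsSelfAdjoint S) (x : E) :
    ‖(S * S) x‖ ^ 2 ≤ ‖S * S‖ * RCLike.re ⟪x, (S * S) x⟫_𝕜 := by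
  have hsymm := hS.isSymmetric
  simp only [mul_apply_eq_comp]
  have hSx : ‖S x‖ ^ 2 = RCLike.re ⟪x, S (S x)⟫_𝕜 := by
    rw [← inner_self_eq_norm_sq (𝕜 := 𝕜), ← ContinuousLinearMap.coe_coe, hsymm]
  calc ‖S (S x)‖ ^ 2 = RCLike.re ⟪S x, (S * S) (S x)⟫_𝕜 := by
        rw [← inner_self_eq_norm_sq (𝕜 := 𝕜), ← ContinuousLinearMap.coe_coe, hsymm]; rfl
    _ ≤ ‖S x‖ * ‖(S * S) (S x)‖ := re_inner_le_norm _ _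
    _ ≤ ‖S x‖ * (‖S * S‖ * ‖S x‖) := by gcongr; exact (S * S).le_opNorm _
    _ = ‖S * S‖ * RCLike.re ⟪x, S (S x)⟫_𝕜 := by rw [← hSx]; ring

theorem Matrix.PosSemidef.norm_toEuclideanCLM_apply_sq_le {𝕜 ι : Type*} [RCLike 𝕜] [Fintype ι]
    [DecidableEq ι] {A : Matrix ι ι 𝕜} (hA : A.PosSemidef) (x : EuclideanSpace 𝕜 ι) :
    ‖toEuclideanCLM (𝕜 := 𝕜) A x‖ ^ 2 ≤
      ‖toEuclideanCLM (𝕜 := 𝕜) A‖ * RCLike.re ⟪x, toEuclideanCLM (𝕜 := 𝕜) A x⟫_𝕜 := by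
  have hS : IsSelfAdjoint (toEuclideanCLM (𝕜 := 𝕜) (CFC.sqrt A)) :=
    (CFC.sqrt_nonneg A).isSelfAdjoint.map _
  have h := hS.norm_mul_self_apply_sq_le x
  rwa [← map_mul, CFC.sqrt_mul_sqrt_self A hA.nonneg] at h

theorem EuclideanSpace.norm_toLp_eq_sqrt_sum_sq {ι : Type*} [Fintype ι] (v : ι → ℝ) :
    ‖toLp 2 v‖ = √(∑ i, v i ^ 2) := by
  simp [EuclideanSpace.norm_eq]

theorem rayleigh_of_norm_large_general
    (n : ℕ) (A : Matrix (Fin n) (Fin n) ℝ) (hpsd : A.PosSemidef)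
    (lam : ℝ)
    (hub : ∀ y : Fin n → ℝ, ∑ i, (y i) ^ 2 = 1 →
      Real.sqrt (∑ i, (A.mulVec y i) ^ 2) ≤ lam)
    (hattain : ∃ y : Fin n → ℝ, ∑ i, (y i) ^ 2 = 1 ∧
      Real.sqrt (∑ i, (A.mulVec y i) ^ 2) = lam)
    (α : ℝ) (hα0 : 0 ≤ α) (hα1 : α ≤ 1 / 4)
    (x : Fin n → ℝ)
    (hAx : Real.sqrt (∑ i, (A.mulVec x i) ^ 2) ≥ (1 - α) * lam) :
    ∑ i, x i * A.mulVec x i ≥ (1 - 5 * α) * lam := by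
  obtain ⟨y₀, -, hy₀⟩ := hattain
  have hlam : 0 ≤ lam := hy₀ ▸ Real.sqrt_nonneg _
  set T := toEuclideanCLM (𝕜 := ℝ) A
  simp only [← EuclideanSpace.norm_toLp_eq_sqrt_sum_sq, ← toEuclideanCLM_toLp] at hub hAx
  have hT : ‖T‖ ≤ lam := T.opNorm_le_of_unit_norm hlam fun y hy => by
    simpa using hub (ofLp y) (by rw [← EuclideanSpace.real_norm_sq_eq, hy, one_pow])
  have hq : 0 ≤ x ⬝ᵥ A *ᵥ x := by simpa using hpsd.dotProduct_mulVec_nonneg x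
  have hsq : ((1 - α) * lam) ^ 2 ≤ lam * (x ⬝ᵥ A *ᵥ x) :=
    calc ((1 - α) * lam) ^ 2 ≤ ‖T (toLp 2 x)‖ ^ 2 := by gcongr; nlinarith
      _ ≤ ‖T‖ * (x ⬝ᵥ A *ᵥ x) := by
        have h := hpsd.norm_toEuclideanCLM_apply_sq_le (toLp 2 x)
        rwa [RCLike.re_to_real, inner_toEuclideanCLM] at h
      _ ≤ lam * (x ⬝ᵥ A *ᵥ x) := by gcongr
  change x ⬝ᵥ A *ᵥ x ≥ _
  rcases hlam.eq_or_lt with rfl | hlam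
  · simpa using hq
  refine le_of_mul_le_mul_left (hsq.trans' ?_) hlam
  nlinarith [mul_nonneg hα0 (sq_nonneg lam)]

/-- If `A` is symmetric PSD with top eigenvalue (spectral norm) `λ₁`, `0 ≤ α ≤ 1/4`,
and `x` is a unit vector with `‖Ax‖₂ ≥ (1−α)λ₁`, then `xᵀ A x ≥ (1−5α)λ₁`. -/
theorem rayleigh_of_norm_large
    (n : ℕ) (A : Matrix (Fin n) (Fin n) ℝ) (hA : A.IsSymm) (hpsd : A.PosSemidef)
    (lam : ℝ)
    (hub : ∀ y : Fin n → ℝ, ∑ i, (y i) ^ 2 = 1 →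
      Real.sqrt (∑ i, (A.mulVec y i) ^ 2) ≤ lam)
    (hattain : ∃ y : Fin n → ℝ, ∑ i, (y i) ^ 2 = 1 ∧
      Real.sqrt (∑ i, (A.mulVec y i) ^ 2) = lam)
    (α : ℝ) (hα0 : 0 ≤ α) (hα1 : α ≤ 1 / 4)
    (x : Fin n → ℝ) (hx : ∑ i, (x i) ^ 2 = 1)
    (hAx : Real.sqrt (∑ i, (A.mulVec x i) ^ 2) ≥ (1 - α) * lam) :
    ∑ i, x i * A.mulVec x i ≥ (1 - 5 * α) * lam :=
  rayleigh_of_norm_large_general n A hpsd lam hub hattain α hα0 hα1 x hAx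
end

section
/- Let M be a real symmetric n×n PSD matrix with eigenvalues σ₁ ≥ … ≥ σₙ ≥ 0 and orthonormal eigenvectors u₁,…,uₙ. Suppose σ_{k+1} ≤ σ₁/2, and that max_{i≤k} n‖uᵢ‖∞² ≤ C. Then for any integer α ≥ 1 and standard basis vectors e_s, e_t: |e_sᵀ M^α e_t| ≤ (kC/n)·σ₁^α + σ₁^α/2^α. -/
/-- **Entry bound for powers of incoherent matrices.** If `M` is symmetric PSD with
eigenvalues `σ₁ ≥ … ≥ σₙ ≥ 0`, `σ_{k+1} ≤ σ₁/2`, and the top-`k` eigenvectors satisfy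
`n‖uᵢ‖_∞² ≤ C`, then `|e_sᵀ M^α e_t| ≤ (kC/n)·σ₁^α + σ₁^α/2^α`. -/
theorem entry_bound_power_incoherent
    (n k : ℕ) (hn : 0 < n) (M : Matrix (Fin n) (Fin n) ℝ)
    (σ : Fin n → ℝ) (u : Fin n → Fin n → ℝ)
    (hdecomp : M = ∑ i, σ i • Matrix.vecMulVec (u i) (u i))
    (horth : ∀ i j, ∑ l, u i l * u j l = if i = j then (1 : ℝ) else 0)
    (hmono : Antitone σ) (hnonneg : ∀ i, 0 ≤ σ i)
    (htail : ∀ i : Fin n, k ≤ (i : ℕ) → σ i ≤ σ ⟨0, hn⟩ / 2)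
    (C : ℝ) (hcoh : ∀ i : Fin n, (i : ℕ) < k → ∀ j, (n : ℝ) * (u i j) ^ 2 ≤ C)
    (α : ℕ) (hα : 1 ≤ α) (s t : Fin n) :
    |(M ^ α) s t| ≤ ((k : ℝ) * C / n) * (σ ⟨0, hn⟩) ^ α + (σ ⟨0, hn⟩) ^ α / 2 ^ α := by
  set σ₀ := σ ⟨0, hn⟩ with hσ₀def
  have hσ₀nn : 0 ≤ σ₀ := hnonneg _
  -- entry formula for M
  have hM : ∀ a b : Fin n, M a b = ∑ i, σ i * (u i a * u i b) := by
    intro a b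
    rw [hdecomp]
    simp [Matrix.sum_apply, Matrix.vecMulVec_apply]
  have hMu : ∀ (i : Fin n) (b : Fin n), ∑ l, u i l * M l b = σ i * u i b := by
    intro i b
    simp only [hM]
    have h1 : ∀ l, u i l * ∑ j, σ j * (u j l * u j b)
        = ∑ j, σ j * u j b * (u i l * u j l) := by
      intro l; rw [Finset.mul_sum]; exact Finset.sum_congr rfl fun j _ => by ring
    simp only [h1]
    rw [Finset.sum_comm]
    have h2 : ∀ j : Fin n, ∑ l, σ j * u j b * (u i l * u j l)
        = σ j * u j b * ∑ l, u i l * u j l := by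
      intro j; rw [Finset.mul_sum]
    simp only [h2, horth, mul_ite, mul_one, mul_zero]
    simp [Finset.sum_ite_eq]
  -- entry formula for powers
  have hpow : ∀ m : ℕ, ∀ a b : Fin n,
      (M ^ (m + 1)) a b = ∑ i, σ i ^ (m + 1) * (u i a * u i b) := by
    intro m
    induction m with
    | zero => intro a b; simpa [pow_one] using hM a b
    | succ m ih =>
      intro a b
      rw [pow_succ, Matrix.mul_apply]
      simp only [ih, Finset.sum_mul]
      rw [Finset.sum_comm]
      refine Finset.sum_congr rfl fun i _ => ?_
      have h3 : ∑ l, σ i ^ (m+1) * (u i a * u i l) * M l b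
          = (σ i ^ (m+1) * u i a) * ∑ l, u i l * M l b := by
        rw [Finset.mul_sum]; exact Finset.sum_congr rfl fun l _ => by ring
      rw [h3, hMu]; ring
  -- orthonormal columns
  have hcol : ∀ b : Fin n, ∑ i, (u i b) ^ 2 = 1 := by
    intro b
    have h1 : (Matrix.of u) * Matrix.transpose (Matrix.of u) = 1 := by
      ext i j
      simpa [Matrix.mul_apply, Matrix.one_apply] using horth i j
    have h2 : Matrix.transpose (Matrix.of u) * (Matrix.of u) = 1 := mul_eq_one_comm.mp h1
    have := congrArg (fun A => A b b) h2
    simpa [Matrix.mul_apply, Matrix.one_apply, sq] using this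
  -- Cauchy-Schwarz
  have hCS : ∑ i, |u i s| * |u i t| ≤ 1 := by
    have h := Finset.sum_mul_sq_le_sq_mul_sq Finset.univ (fun i => |u i s|) (fun i => |u i t|)
    simp only [sq_abs] at h
    rw [hcol s, hcol t, one_mul] at h
    have hnn : 0 ≤ ∑ i, |u i s| * |u i t| :=
      Finset.sum_nonneg fun i _ => mul_nonneg (abs_nonneg _) (abs_nonneg _)
    nlinarith
  -- entry value
  obtain ⟨m, rfl⟩ : ∃ m, α = m + 1 := ⟨α - 1, (Nat.succ_pred_eq_of_pos hα).symm⟩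
  rw [hpow m s t]
  -- abs of sum
  have habs : |∑ i, σ i ^ (m+1) * (u i s * u i t)|
      ≤ ∑ i, σ i ^ (m+1) * (|u i s| * |u i t|) := by
    refine (Finset.abs_sum_le_sum_abs _ _).trans_eq ?_
    refine Finset.sum_congr rfl fun i _ => ?_
    rw [abs_mul, abs_mul, abs_pow, abs_of_nonneg (hnonneg i)]
  refine habs.trans ?_
  rw [← Finset.sum_filter_add_sum_filter_not Finset.univ (fun i : Fin n => (i : ℕ) < k)]
  have hhead : ∑ i ∈ Finset.univ.filter (fun i : Fin n => (i : ℕ) < k),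
      σ i ^ (m+1) * (|u i s| * |u i t|) ≤ ((k : ℝ) * C / n) * σ₀ ^ (m+1) := by
    rcases Nat.eq_zero_or_pos k with hk | hk
    · simp [hk]
    have hCnn : 0 ≤ C := by
      have h0 : ((⟨0, hn⟩ : Fin n) : ℕ) < k := hk
      have := hcoh ⟨0, hn⟩ h0 ⟨0, hn⟩
      nlinarith [sq_nonneg (u ⟨0, hn⟩ ⟨0, hn⟩), (Nat.cast_pos (α := ℝ)).mpr hn]
    have hnpos : (0 : ℝ) < n := Nat.cast_pos.mpr hn
    have hterm : ∀ i ∈ Finset.univ.filter (fun i : Fin n => (i : ℕ) < k),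
        σ i ^ (m+1) * (|u i s| * |u i t|) ≤ σ₀ ^ (m+1) * (C / n) := by
      intro i hi
      rw [Finset.mem_filter] at hi
      have hik := hi.2
      have hσi : σ i ≤ σ₀ := hmono (by simp [Fin.le_def])
      have h1 : (u i s) ^ 2 ≤ C / n := by
        have := hcoh i hik s
        rw [le_div_iff₀ hnpos]; linarith
      have h2 : (u i t) ^ 2 ≤ C / n := by
        have := hcoh i hik t
        rw [le_div_iff₀ hnpos]; linarith
      have habs2 : |u i s| * |u i t| ≤ C / n := by
        nlinarith [sq_nonneg (|u i s| - |u i t|), sq_abs (u i s), sq_abs (u i t),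
          abs_nonneg (u i s), abs_nonneg (u i t)]
      have hpw : σ i ^ (m+1) ≤ σ₀ ^ (m+1) := pow_le_pow_left₀ (hnonneg i) hσi _
      exact mul_le_mul hpw habs2 (mul_nonneg (abs_nonneg _) (abs_nonneg _))
        (pow_nonneg hσ₀nn _)
    calc ∑ i ∈ Finset.univ.filter (fun i : Fin n => (i : ℕ) < k),
          σ i ^ (m+1) * (|u i s| * |u i t|)
        ≤ ∑ _i ∈ Finset.univ.filter (fun i : Fin n => (i : ℕ) < k),
          σ₀ ^ (m+1) * (C / n) := Finset.sum_le_sum hterm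
      _ = ((Finset.univ.filter (fun i : Fin n => (i : ℕ) < k)).card : ℝ)
          * (σ₀ ^ (m+1) * (C / n)) := by rw [Finset.sum_const, nsmul_eq_mul]
      _ ≤ (k : ℝ) * (σ₀ ^ (m+1) * (C / n)) := by
          refine mul_le_mul_of_nonneg_right ?_
            (mul_nonneg (pow_nonneg hσ₀nn _) (div_nonneg hCnn hnpos.le))
          have hcard : (Finset.univ.filter (fun i : Fin n => (i : ℕ) < k)).card ≤ k := by
            have : (Finset.univ.filter (fun i : Fin n => (i : ℕ) < k)).card ≤
                (Finset.univ : Finset (Fin k)).card := by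
              refine Finset.card_le_card_of_injOn
                (fun i => ⟨(i : ℕ) % k, Nat.mod_lt _ hk⟩) (fun i _ => Finset.mem_univ _) ?_
              intro i hi j hj hij
              rw [Finset.mem_coe, Finset.mem_filter] at hi hj
              have : ((i : ℕ) % k) = ((j : ℕ) % k) := congrArg Fin.val hij
              rw [Nat.mod_eq_of_lt hi.2, Nat.mod_eq_of_lt hj.2] at this
              exact Fin.ext this
            simpa using this
          exact_mod_cast hcard
      _ = ((k : ℝ) * C / n) * σ₀ ^ (m+1) := by ring
  have htailb : ∑ i ∈ Finset.univ.filter (fun i : Fin n => ¬ (i : ℕ) < k),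
      σ i ^ (m+1) * (|u i s| * |u i t|) ≤ σ₀ ^ (m+1) / 2 ^ (m+1) := by
    have hterm : ∀ i ∈ Finset.univ.filter (fun i : Fin n => ¬ (i : ℕ) < k),
        σ i ^ (m+1) * (|u i s| * |u i t|) ≤ (σ₀ / 2) ^ (m+1) * (|u i s| * |u i t|) := by
      intro i hi
      rw [Finset.mem_filter] at hi
      have hik : k ≤ (i : ℕ) := Nat.le_of_not_lt hi.2
      exact mul_le_mul_of_nonneg_right
        (pow_le_pow_left₀ (hnonneg i) (htail i hik) _)
        (mul_nonneg (abs_nonneg _) (abs_nonneg _))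
    calc ∑ i ∈ Finset.univ.filter (fun i : Fin n => ¬ (i : ℕ) < k),
          σ i ^ (m+1) * (|u i s| * |u i t|)
        ≤ ∑ i ∈ Finset.univ.filter (fun i : Fin n => ¬ (i : ℕ) < k),
          (σ₀ / 2) ^ (m+1) * (|u i s| * |u i t|) := Finset.sum_le_sum hterm
      _ = (σ₀ / 2) ^ (m+1) * ∑ i ∈ Finset.univ.filter (fun i : Fin n => ¬ (i : ℕ) < k),
          (|u i s| * |u i t|) := by rw [Finset.mul_sum]
      _ ≤ (σ₀ / 2) ^ (m+1) * ∑ i, (|u i s| * |u i t|) := by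
          refine mul_le_mul_of_nonneg_left ?_ (pow_nonneg (by linarith) _)
          exact Finset.sum_le_sum_of_subset_of_nonneg (Finset.filter_subset _ _)
            (fun i _ _ => mul_nonneg (abs_nonneg _) (abs_nonneg _))
      _ ≤ (σ₀ / 2) ^ (m+1) * 1 :=
          mul_le_mul_of_nonneg_left hCS (pow_nonneg (by linarith) _)
      _ = σ₀ ^ (m+1) / 2 ^ (m+1) := by rw [mul_one, div_pow]
  linarith
end

section
/- Let M be a real symmetric n×n PSD matrix with eigenvalues σ₁ ≥ … ≥ σₙ ≥ 0, σ_{k+1} ≤ σ₁/2, and orthonormal eigenvectors u₁,…,uₙ with max_{i≤k} n‖uᵢ‖∞² ≤ C. Set δ = min{√(kC/n), 1}. Then for any integer α ≥ 1 and any standard basis vector e_s: ‖M^α e_s‖₂ ≤ δ·σ₁^α + σ₁^α/2^α. -/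
/-!
Let `U` be the orthogonal matrix with rows `uᵢ`. Then `M = Uᵀ diag(σ) U`, so
`M^α = Uᵀ diag(σ^α) U` and `‖M^α e_s‖₂² = ∑ᵢ σᵢ^{2α} uᵢ(s)²`, where `(uᵢ(s))ᵢ` is a unit vector.
For `i < k` we have `σᵢ ≤ σ₁`, and by coherence these indices carry at most `δ²` of that unit
vector; for `i ≥ k` we have `σᵢ ≤ σ₁/2`. Hence `‖M^α e_s‖₂² ≤ (δσ₁^α)² + (σ₁^α/2^α)²`.
-/

open Finset Matrix

section OrthogonalConjugation

variable {ι R : Type*} [Fintype ι] [DecidableEq ι] [CommRing R] {U : Matrix ι ι R}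

theorem sum_smul_vecMulVec_eq_transpose_mul_diagonal_mul (d : ι → R) :
    ∑ i, d i • vecMulVec (U i) (U i) = Uᵀ * diagonal d * U := by
  ext x y
  rw [mul_apply]
  simp only [Matrix.sum_apply, Matrix.smul_apply, vecMulVec_apply, smul_eq_mul, mul_diagonal,
    transpose_apply]
  exact sum_congr rfl fun i _ => by ring

theorem transpose_mul_diagonal_mul_pow (hU : U * Uᵀ = 1) (d : ι → R) (m : ℕ) :
    (Uᵀ * diagonal d * U) ^ m = Uᵀ * diagonal (d ^ m) * U := by
  rw [← diagonal_pow]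
  exact Units.conj_pow ⟨Uᵀ, U, mul_eq_one_comm.mp hU, hU⟩ (diagonal d) m

theorem sum_sq_transpose_mulVec (hU : U * Uᵀ = 1) (w : ι → R) :
    ∑ j, (Uᵀ *ᵥ w) j ^ 2 = ∑ i, w i ^ 2 := by
  simp only [sq]
  change (Uᵀ *ᵥ w) ⬝ᵥ (Uᵀ *ᵥ w) = w ⬝ᵥ w
  rw [dotProduct_mulVec, vecMul_transpose, mulVec_mulVec, hU, one_mulVec]

theorem sum_sq_transpose_mul_diagonal_mul_mulVec_single (hU : U * Uᵀ = 1) (d : ι → R) (s : ι) :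
    ∑ j, ((Uᵀ * diagonal d * U) *ᵥ Pi.single s 1) j ^ 2 = ∑ i, (d i * U i s) ^ 2 := by
  rw [← mulVec_mulVec, ← mulVec_mulVec, sum_sq_transpose_mulVec hU, mulVec_single_one]
  simp only [mulVec_diagonal, col_apply]

theorem sum_sq_apply_eq_one_of_mul_transpose_eq_one (hU : U * Uᵀ = 1) (s : ι) :
    ∑ i, U i s ^ 2 = 1 := by
  simpa [mul_apply, sq] using congrArg (fun A : Matrix ι ι R => A s s) (mul_eq_one_comm.mp hU)

end OrthogonalConjugation

section WeightedSums

variable {ι : Type*}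

theorem sum_le_min_sqrt_one_sq (t : Finset ι) {f : ι → ℝ} (hf : ∀ i ∈ t, 0 ≤ f i) {c : ℝ}
    (hc : ∀ i ∈ t, f i ≤ c) {k : ℕ} (hk : #t ≤ k) (h1 : ∑ i ∈ t, f i ≤ 1) :
    ∑ i ∈ t, f i ≤ min √(k * c) 1 ^ 2 := by
  obtain rfl | ⟨i₀, hi₀⟩ := t.eq_empty_or_nonempty
  · simpa using sq_nonneg _
  have hsum : ∑ i ∈ t, f i ≤ k * c := calc
    ∑ i ∈ t, f i ≤ #t • c := sum_le_card_nsmul t f c hc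
    _ ≤ k * c := by
      rw [nsmul_eq_mul]
      gcongr
      exact (hf i₀ hi₀).trans (hc i₀ hi₀)
  rcases le_total √(k * c) 1 with h | h
  · rwa [min_eq_left h, Real.sq_sqrt ((sum_nonneg hf).trans hsum)]
  · rwa [min_eq_right h, one_pow]

theorem sum_sq_mul_le_of_abs_le (t : Finset ι) {w : ι → ℝ} {a : ℝ} (hw : ∀ i ∈ t, |w i| ≤ a)
    (c : ι → ℝ) : ∑ i ∈ t, (w i * c i) ^ 2 ≤ a ^ 2 * ∑ i ∈ t, c i ^ 2 := by
  rw [mul_sum]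
  refine sum_le_sum fun i hi => ?_
  rw [mul_pow]
  exact mul_le_mul_of_nonneg_right
    (sq_le_sq' (neg_le_of_abs_le (hw i hi)) (le_of_abs_le (hw i hi))) (sq_nonneg _)

theorem sqrt_sum_sq_mul_le [Fintype ι] [DecidableEq ι] (t : Finset ι) {w c : ι → ℝ}
    {a b δ : ℝ} (ha : ∀ i ∈ t, |w i| ≤ a) (hb : ∀ i ∈ tᶜ, |w i| ≤ b) (ha₀ : 0 ≤ a) (hb₀ : 0 ≤ b)
    (hδ : 0 ≤ δ) (hhead : ∑ i ∈ t, c i ^ 2 ≤ δ ^ 2) (htail : ∑ i ∈ tᶜ, c i ^ 2 ≤ 1) :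
    √(∑ i, (w i * c i) ^ 2) ≤ δ * a + b := by
  rw [Real.sqrt_le_left (by positivity), ← sum_add_sum_compl t]
  have h₁ := (sum_sq_mul_le_of_abs_le t ha c).trans (mul_le_mul_of_nonneg_left hhead (sq_nonneg a))
  have h₂ := (sum_sq_mul_le_of_abs_le tᶜ hb c).trans (mul_le_mul_of_nonneg_left htail (sq_nonneg b))
  nlinarith [mul_nonneg (mul_nonneg hδ ha₀) hb₀]

end WeightedSums

theorem column_norm_power_incoherent_general
    (n k : ℕ) (hn : 0 < n) (M : Matrix (Fin n) (Fin n) ℝ)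
    (σ : Fin n → ℝ) (u : Fin n → Fin n → ℝ)
    (hdecomp : M = ∑ i, σ i • Matrix.vecMulVec (u i) (u i))
    (horth : ∀ i j, ∑ l, u i l * u j l = if i = j then (1 : ℝ) else 0)
    (hmono : Antitone σ) (hnonneg : ∀ i, 0 ≤ σ i)
    (htail : ∀ i : Fin n, k ≤ (i : ℕ) → σ i ≤ σ ⟨0, hn⟩ / 2)
    (C : ℝ) (hcoh : ∀ i : Fin n, (i : ℕ) < k → ∀ j, (n : ℝ) * (u i j) ^ 2 ≤ C)
    (δ : ℝ) (hδ : δ = min (Real.sqrt ((k : ℝ) * C / n)) 1)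
    (α : ℕ) (s : Fin n) :
    Real.sqrt (∑ j, ((M ^ α).mulVec (Pi.single s 1) j) ^ 2)
      ≤ δ * (σ ⟨0, hn⟩) ^ α + (σ ⟨0, hn⟩) ^ α / 2 ^ α := by
  have hU : of u * (of u)ᵀ = 1 := by
    ext i j
    simpa [mul_apply, one_apply] using horth i j
  have hM : M = (of u)ᵀ * diagonal σ * of u :=
    hdecomp.trans (sum_smul_vecMulVec_eq_transpose_mul_diagonal_mul σ)
  rw [hM, transpose_mul_diagonal_mul_pow hU, sum_sq_transpose_mul_diagonal_mul_mulVec_single hU,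
    ← div_pow]
  have hσ_pow (i : Fin n) : |(σ ^ α) i| = σ i ^ α := abs_of_nonneg (pow_nonneg (hnonneg i) α)
  refine sqrt_sum_sq_mul_le {i : Fin n | (i : ℕ) < k} (fun i _ => ?_) (fun i hi => ?_)
    (pow_nonneg (hnonneg _) α) (pow_nonneg (div_nonneg (hnonneg _) zero_le_two) α) (hδ ▸ by positivity) ?_ ?_
  · exact (hσ_pow i).trans_le (pow_le_pow_left₀ (hnonneg i) (hmono (Nat.zero_le i)) α)
  · simp only [mem_compl, mem_filter, mem_univ, true_and, not_lt] at hi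
    exact (hσ_pow i).trans_le (pow_le_pow_left₀ (hnonneg i) (htail i hi) α)
  · rw [hδ, mul_div_assoc]
    refine sum_le_min_sqrt_one_sq _ (fun i _ => sq_nonneg _) (fun i hi => ?_)
      (Fin.card_filter_val_lt.trans_le (min_le_right _ _)) ?_
    · rw [le_div_iff₀ (by exact_mod_cast hn), mul_comm]
      exact hcoh i (mem_filter.mp hi).2 s
    · exact (sum_le_univ_sum_of_nonneg fun _ => sq_nonneg _).trans
        (sum_sq_apply_eq_one_of_mul_transpose_eq_one hU s).le
  · exact (sum_le_univ_sum_of_nonneg fun _ => sq_nonneg _).trans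
      (sum_sq_apply_eq_one_of_mul_transpose_eq_one hU s).le

/-- **Column norm bound for powers of incoherent matrices.** With the same setup as the
entry bound and `δ = min √(kC/n) 1`, each column of `M^α` satisfies
`‖M^α e_s‖₂ ≤ δ σ₁^α + σ₁^α/2^α`. -/
theorem column_norm_power_incoherent
    (n k : ℕ) (hn : 0 < n) (M : Matrix (Fin n) (Fin n) ℝ)
    (σ : Fin n → ℝ) (u : Fin n → Fin n → ℝ)
    (hdecomp : M = ∑ i, σ i • Matrix.vecMulVec (u i) (u i))
    (horth : ∀ i j, ∑ l, u i l * u j l = if i = j then (1 : ℝ) else 0)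
    (hmono : Antitone σ) (hnonneg : ∀ i, 0 ≤ σ i)
    (htail : ∀ i : Fin n, k ≤ (i : ℕ) → σ i ≤ σ ⟨0, hn⟩ / 2)
    (C : ℝ) (hcoh : ∀ i : Fin n, (i : ℕ) < k → ∀ j, (n : ℝ) * (u i j) ^ 2 ≤ C)
    (δ : ℝ) (hδ : δ = min (Real.sqrt ((k : ℝ) * C / n)) 1)
    (α : ℕ) (hα : 1 ≤ α) (s : Fin n) :
    Real.sqrt (∑ j, ((M ^ α).mulVec (Pi.single s 1) j) ^ 2)
      ≤ δ * (σ ⟨0, hn⟩) ^ α + (σ ⟨0, hn⟩) ^ α / 2 ^ α :=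
  column_norm_power_incoherent_general n k hn M σ u hdecomp horth hmono hnonneg htail C hcoh δ hδ α
    s
end

section
/- Let D ∈ {0,1}ⁿ with exactly n/2 nonzero entries, and let v ∈ ℝⁿ be a unit vector with ⟨D/‖D‖₂, v⟩ ≥ 1 − α. Define D* ∈ {0,1}ⁿ by D*ᵢ = 1 iff √(n/2)·vᵢ ≥ 1/2. Then the Hamming distance between D* and D is at most (n/2)·6√α. -/
/-!
Put `s = √(n/2) = ‖D‖₂`. Expanding the square, `‖s v − D‖₂² = 2s² − 2s⟨D, v⟩ ≤ 2s²α = nα`,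
so by Cauchy–Schwarz `‖s v − D‖₁ ≤ √n · √(nα) = n√α`. Rounding `s vᵢ` at `1/2` can only
disagree with the bit `Dᵢ` when `|s vᵢ − Dᵢ| ≥ 1/2`, so there are at most `2n√α` disagreements.
-/

open Finset

lemma sum_sq_eq_card_filter_eq_one {ι : Type*} [Fintype ι] {f : ι → ℝ}
    (hf : ∀ i, f i = 0 ∨ f i = 1) :
    ∑ i, f i ^ 2 = #(univ.filter fun i => f i = 1) := by
  rw [← sum_boole]
  refine sum_congr rfl fun i _ => ?_
  rcases hf i with h | h <;> simp [h]

lemma sum_sq_mul_sub_le_of_correlation {ι : Type*} [Fintype ι] {v w : ι → ℝ} {s α : ℝ}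
    (hv : ∑ i, v i ^ 2 = 1) (hw : ∑ i, w i ^ 2 = s ^ 2)
    (hcorr : 1 - α ≤ ∑ i, (w i / s) * v i) :
    ∑ i, (s * v i - w i) ^ 2 ≤ 2 * s ^ 2 * α := by
  have hexpand : ∑ i, (s * v i - w i) ^ 2
      = s ^ 2 * ∑ i, v i ^ 2 - 2 * s * ∑ i, w i * v i + ∑ i, w i ^ 2 := by
    simp only [mul_sum, ← sum_sub_distrib, ← sum_add_distrib]
    exact sum_congr rfl fun i _ => by ring
  -- `s⟨w, v⟩ = s²⟨w/s, v⟩` holds also for `s = 0`, where `w/s = 0`.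
  have hscale : s * ∑ i, w i * v i = s ^ 2 * ∑ i, (w i / s) * v i := by
    rcases eq_or_ne s 0 with rfl | hs
    · simp
    · rw [mul_sum, mul_sum]
      exact sum_congr rfl fun i _ => by field_simp
  have : s ^ 2 * (1 - α) ≤ s * ∑ i, w i * v i := by
    rw [hscale]; exact mul_le_mul_of_nonneg_left hcorr (sq_nonneg s)
  rw [hexpand, hv, hw]
  linarith

lemma sum_abs_le_sqrt_card_mul_sqrt_sum_sq {ι : Type*} (s : Finset ι) (f : ι → ℝ) :
    ∑ i ∈ s, |f i| ≤ √(#s : ℝ) * √(∑ i ∈ s, f i ^ 2) := by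
  simpa [mul_comm] using Real.sum_mul_le_sqrt_mul_sqrt s (fun i => |f i|) 1

lemma half_le_abs_sub_of_round_ne {x d : ℝ} (hd : d = 0 ∨ d = 1)
    (hne : (if 1 / 2 ≤ x then (1 : ℝ) else 0) ≠ d) : 1 / 2 ≤ |x - d| := by
  split_ifs at hne with hx <;> rcases hd with rfl | rfl <;> norm_num at hne
  · rw [sub_zero, abs_of_nonneg (by linarith)]; exact hx
  · rw [abs_of_nonpos (by linarith)]; linarith

lemma card_filter_round_ne_le {ι : Type*} [Fintype ι] {x d : ι → ℝ}
    (hd : ∀ i, d i = 0 ∨ d i = 1) :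
    (#(univ.filter fun i => (if 1 / 2 ≤ x i then (1 : ℝ) else 0) ≠ d i) : ℝ)
      ≤ 2 * ∑ i, |x i - d i| := by
  set bad := univ.filter fun i => (if 1 / 2 ≤ x i then (1 : ℝ) else 0) ≠ d i
  have hhalf : #bad • (1 / 2 : ℝ) ≤ ∑ i ∈ bad, |x i - d i| :=
    card_nsmul_le_sum _ _ _ fun i hi => half_le_abs_sub_of_round_ne (hd i) (mem_filter.mp hi).2
  have hsub : ∑ i ∈ bad, |x i - d i| ≤ ∑ i, |x i - d i| :=
    sum_le_sum_of_subset_of_nonneg (subset_univ _) fun i _ _ => abs_nonneg _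
  rw [nsmul_eq_mul] at hhalf
  linarith

theorem rounding_hamming_bound_general
    (n : ℕ) (D : Fin n → ℝ) (hD01 : ∀ i, D i = 0 ∨ D i = 1)
    (hcard : 2 * (Finset.univ.filter fun i => D i = 1).card = n)
    (v : Fin n → ℝ) (hv : ∑ i, (v i) ^ 2 = 1)
    (α : ℝ)
    (hcorr : ∑ i, (D i / Real.sqrt ((n : ℝ) / 2)) * v i ≥ 1 - α)
    (Dstar : Fin n → ℝ)
    (hDstar : ∀ i, Dstar i = if (1 : ℝ) / 2 ≤ Real.sqrt ((n : ℝ) / 2) * v i then 1 else 0) :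
    ((Finset.univ.filter fun i => Dstar i ≠ D i).card : ℝ)
      ≤ ((n : ℝ) / 2) * (6 * Real.sqrt α) := by
  obtain rfl : Dstar = _ := funext hDstar
  set s := Real.sqrt ((n : ℝ) / 2)
  have hs2 : s ^ 2 = n / 2 := Real.sq_sqrt (by positivity)
  have hD : ∑ i, D i ^ 2 = s ^ 2 := by
    rw [sum_sq_eq_card_filter_eq_one hD01, hs2]
    have : (2 * #(univ.filter fun i => D i = 1) : ℝ) = n := by exact_mod_cast hcard
    linarith
  have hL2 : ∑ i, (s * v i - D i) ^ 2 ≤ n * α := by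
    have := sum_sq_mul_sub_le_of_correlation hv hD hcorr
    rwa [hs2, show 2 * ((n : ℝ) / 2) = n by ring] at this
  have hL1 : ∑ i, |s * v i - D i| ≤ n * √α :=
    calc ∑ i, |s * v i - D i| ≤ √(n : ℝ) * √(∑ i, (s * v i - D i) ^ 2) := by
          simpa using sum_abs_le_sqrt_card_mul_sqrt_sum_sq univ fun i => s * v i - D i
      _ ≤ √(n : ℝ) * √(n * α) := by gcongr
      _ = n * √α := by
          rw [Real.sqrt_mul n.cast_nonneg, ← mul_assoc, Real.mul_self_sqrt n.cast_nonneg]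
  have : 0 ≤ (n : ℝ) * √α := by positivity
  calc _ ≤ 2 * ∑ i, |s * v i - D i| := card_filter_round_ne_le hD01
    _ ≤ ((n : ℝ) / 2) * (6 * √α) := by linarith

/-- **Rounding recovers the database.** With `D ∈ {0,1}ⁿ` having exactly `n/2` ones
and `v` a unit vector with `⟨D/‖D‖₂, v⟩ ≥ 1 − α`, defining `D*ᵢ = 1` iff
`√(n/2)·vᵢ ≥ 1/2`, the Hamming distance between `D*` and `D` is at most `(n/2)·6√α`. -/
theorem rounding_hamming_bound
    (n : ℕ) (D : Fin n → ℝ) (hD01 : ∀ i, D i = 0 ∨ D i = 1)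
    (hcard : 2 * (Finset.univ.filter fun i => D i = 1).card = n)
    (v : Fin n → ℝ) (hv : ∑ i, (v i) ^ 2 = 1)
    (α : ℝ) (hα0 : 0 ≤ α) (hα1 : α ≤ 1)
    (hcorr : ∑ i, (D i / Real.sqrt ((n : ℝ) / 2)) * v i ≥ 1 - α)
    (Dstar : Fin n → ℝ)
    (hDstar : ∀ i, Dstar i = if (1 : ℝ) / 2 ≤ Real.sqrt ((n : ℝ) / 2) * v i then 1 else 0) :
    ((Finset.univ.filter fun i => Dstar i ≠ D i).card : ℝ)
      ≤ ((n : ℝ) / 2) * (6 * Real.sqrt α) :=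
  rounding_hamming_bound_general n D hD01 hcard v hv α hcorr Dstar hDstar
end
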